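/- arXiv:2203.05485 — 2 statements merged into one kernel-verified Lean document; each statement's English description precedes it below -/
import Mathlib

section
/- Let α ≥ 10 be a real number and let n be a sufficiently large positive integer. Let G be a simple graph on n vertices with at least α·n^{3/2} edges. Then G has a subgraph H on m ≥ n^{1/12} vertices such that for some real α' ≥ α/20 the following hold: e(H) ≥ α'·m^{3/2}; the maximum degree satisfies Δ(H) ≤ 12000·α'·m^{1/2}; and for every edge uv of H, the vertex u has at least α'·m^{1/2} neighbours w in H satisfying d_H(v,w) ≥ α'. -/
/-!
Let `E(S) = 2 e(G[S])` and call `S` dense when `E(S)^42 ≥ (2α)^42 n^2 |S|^61`. The whole vertex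
set is dense, and a dense set has `|S|^23 ≥ (2α)^42 n^2`, hence `|S| ≥ n^{1/12}` for large `n`.
So it suffices that every dense `S` either contains the required subgraph or a smaller dense set.

Fewer than `|S| / 320` vertices, forming `T`, have degree above `320 E(S) / |S|` in `G[S]`. If
`G[S \ T]` keeps `5/8` of `E(S)`, let `d` be its average degree and `θ = d / (8 √|S \ T|)`. A
subgraph `H` of `G[S \ T]` maximising `4 e(H) - d |supp H| - 16/(d-8) ∑_{x,y} min(d_H(x,y), θ)`
keeps `2/5` of the edges and has the codegree property for `θ`. Either its maximum degree is at
most `12000 θ √m` on its `m` vertices, or `m ≤ |S| / 8` and its vertex set is a smaller dense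
set. Otherwise most edges of `G[S]` meet `T`, and `T`, or `T` with the `2|T|` vertices sending
most edges into `T`, is a smaller dense set.
-/

open SimpleGraph

/-- The codegree of `u` and `v` in `H`: the number of common neighbours. -/
noncomputable def codeg {V : Type*} (H : SimpleGraph V) (u v : V) : ℕ :=
  (H.neighborSet u ∩ H.neighborSet v).ncard

open Finset

section

open scoped Classical

section Codegree

variable {V : Type*} {H H' : SimpleGraph V}

lemma codeg_comm (H : SimpleGraph V) (u v : V) : codeg H u v = codeg H v u := by
  rw [codeg, codeg, Set.inter_comm]

lemma codeg_eq_zero_of_notMem_support {u : V} (hu : u ∉ H.support) (v : V) :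
    codeg H u v = 0 := by
  have : H.neighborSet u = ∅ := Set.eq_empty_of_forall_notMem fun w hw => hu ⟨w, hw⟩
  rw [codeg, this, Set.empty_inter, Set.ncard_empty]

variable [Fintype V]

lemma codeg_mono (h : H ≤ H') (u v : V) : codeg H u v ≤ codeg H' u v :=
  Set.ncard_le_ncard (Set.inter_subset_inter (neighborSet_mono h u) (neighborSet_mono h v))

lemma codeg_deleteEdges_add_one {u v y : V} (huv : H.Adj u v) (huy : H.Adj u y) (hyv : y ≠ v) :
    codeg (H.deleteEdges {s(u, v)}) v y + 1 = codeg H v y := by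
  have hyu : y ≠ u := (H.ne_of_adj huy).symm
  have key : (H.deleteEdges {s(u, v)}).neighborSet v ∩ (H.deleteEdges {s(u, v)}).neighborSet y
      = (H.neighborSet v ∩ H.neighborSet y) \ {u} := by
    ext w
    simp only [Set.mem_inter_iff, mem_neighborSet, deleteEdges_adj, Set.mem_singleton_iff,
      Sym2.eq_iff, Set.mem_sdiff]
    grind
  rw [codeg, codeg, key, Set.ncard_sdiff_singleton_add_one
    (show u ∈ H.neighborSet v ∩ H.neighborSet y from ⟨huv.symm, huy.symm⟩)]

noncomputable def codegPotential (θ : ℝ) (H : SimpleGraph V) : ℝ :=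
  ∑ p : V × V, min (codeg H p.1 p.2 : ℝ) θ

lemma codegPotential_mono (θ : ℝ) (h : H ≤ H') : codegPotential θ H ≤ codegPotential θ H' :=
  sum_le_sum fun p _ => min_le_min_right θ (by exact_mod_cast codeg_mono h p.1 p.2)

lemma codegPotential_nonneg {θ : ℝ} (hθ : 0 ≤ θ) (H : SimpleGraph V) :
    0 ≤ codegPotential θ H :=
  sum_nonneg fun _ _ => le_min (Nat.cast_nonneg _) hθ

lemma codegPotential_le {θ : ℝ} (hθ : 0 ≤ θ) (H : SimpleGraph V) :
    codegPotential θ H ≤ H.support.ncard ^ 2 * θ := by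
  set s := H.support.toFinset
  calc codegPotential θ H ≤ ∑ p : V × V, if p ∈ s ×ˢ s then θ else 0 := by
        refine sum_le_sum fun p _ => ?_
        split_ifs with hp
        · exact min_le_right _ _
        · rw [mem_product, Set.mem_toFinset, Set.mem_toFinset, not_and_or] at hp
          rcases hp with hp | hp
          · simp [codeg_eq_zero_of_notMem_support hp, hθ]
          · simp [codeg_comm H p.1, codeg_eq_zero_of_notMem_support hp, hθ]
    _ = H.support.ncard ^ 2 * θ := by
        rw [sum_ite_mem, univ_inter, sum_const, card_product, ← Set.ncard_eq_toFinset_card',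
          nsmul_eq_mul]
        push_cast
        ring

lemma codegPotential_deleteEdges_add_le (θ : ℝ) {u v : V} (huv : H.Adj u v) :
    codegPotential θ (H.deleteEdges {s(u, v)})
      + 2 * #{y | H.Adj u y ∧ y ≠ v ∧ (codeg H v y : ℝ) < θ} ≤ codegPotential θ H := by
  set L : Finset V := {y | H.Adj u y ∧ y ≠ v ∧ (codeg H v y : ℝ) < θ}
  set H' := H.deleteEdges {s(u, v)}
  have hvL : v ∉ L := by simp [L]
  set Q := ({v} ×ˢ L) ∪ (L ×ˢ {v})
  have hQ : #Q = 2 * #L := by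
    rw [card_union_of_disjoint, card_product, card_product, card_singleton]
    · ring
    · rw [Finset.disjoint_left]
      rintro ⟨a, b⟩ h1 h2
      rw [mem_product, mem_singleton] at h1 h2
      exact hvL (h1.1 ▸ h2.1)
  have hdrop : ∀ y ∈ L, min (codeg H' v y : ℝ) θ + 1 ≤ min (codeg H v y : ℝ) θ := by
    intro y hy
    simp only [L, mem_filter, mem_univ, true_and] at hy
    obtain ⟨huy, hyv, hlt⟩ := hy
    have h : (codeg H' v y : ℝ) + 1 = codeg H v y := by
      exact_mod_cast codeg_deleteEdges_add_one huv huy hyv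
    rw [min_eq_left hlt.le, min_eq_left (by linarith)]
    linarith
  have hterm : ∀ p : V × V, min (codeg H' p.1 p.2 : ℝ) θ + (if p ∈ Q then 1 else 0)
      ≤ min (codeg H p.1 p.2 : ℝ) θ := by
    rintro ⟨a, b⟩
    split_ifs with hp
    · rcases mem_union.1 hp with h | h <;> rw [mem_product, mem_singleton] at h
      · obtain ⟨rfl, hb⟩ := h
        exact hdrop b hb
      · obtain ⟨ha, rfl⟩ := h
        rw [codeg_comm H', codeg_comm H]
        exact hdrop a ha
    · rw [add_zero]
      exact min_le_min_right θ (by exact_mod_cast codeg_mono (H.deleteEdges_le _) a b)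
  calc codegPotential θ H' + 2 * #L
      = ∑ p : V × V, (min (codeg H' p.1 p.2 : ℝ) θ + if p ∈ Q then 1 else 0) := by
        rw [sum_add_distrib, sum_ite_mem, univ_inter, sum_const, nsmul_one, hQ, codegPotential]
        push_cast
        ring
    _ ≤ codegPotential θ H := sum_le_sum fun p _ => hterm p

end Codegree

section Cleaning

variable {V : Type*} [Fintype V] {H : SimpleGraph V}

lemma ncard_edgeSet_deleteIncidenceSet_add_degree (H : SimpleGraph V) (x : V) :
    (H.deleteIncidenceSet x).edgeSet.ncard + H.degree x = H.edgeSet.ncard := by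
  rw [← coe_edgeFinset, ← coe_edgeFinset, Set.ncard_coe_finset, Set.ncard_coe_finset,
    edgeFinset_deleteIncidenceSet_eq_sdiff, ← card_incidenceFinset_eq_degree,
    card_sdiff_add_card_eq_card (H.incidenceFinset_subset x)]

lemma ncard_edgeSet_deleteEdges_add_one {u v : V} (huv : H.Adj u v) :
    (H.deleteEdges {s(u, v)}).edgeSet.ncard + 1 = H.edgeSet.ncard := by
  rw [edgeSet_deleteEdges, Set.ncard_sdiff_singleton_add_one (show s(u, v) ∈ H.edgeSet from huv)]

lemma degree_le_one_add_card_add_card (θ : ℝ) (u v : V) :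
    H.degree u ≤ 1 + #{y | H.Adj u y ∧ y ≠ v ∧ (codeg H v y : ℝ) < θ}
      + #{w | H.Adj u w ∧ θ ≤ codeg H v w} := by
  rw [← card_neighborFinset_eq_degree, add_assoc]
  refine (card_le_card fun w hw => ?_).trans ((card_insert_le v _).trans
    (by rw [add_comm]; exact Nat.add_le_add_left (card_union_le _ _) 1))
  rw [mem_neighborFinset] at hw
  by_cases hwv : w = v
  · exact hwv ▸ mem_insert_self _ _
  · refine mem_insert_of_mem (mem_union.2 ?_)
    rcases lt_or_ge (codeg H v w : ℝ) θ with h | h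
    · exact Or.inl (by simp [hw, hwv, h])
    · exact Or.inr (by simp [hw, h])

/-- Deleting a vertex of degree `< d / 4`, or an edge `uv` such that fewer than `d / 8`
neighbours `w` of `u` have `d(v, w) ≥ θ`, strictly increases this score. -/
noncomputable def cleaningScore (d θ : ℝ) (H : SimpleGraph V) : ℝ :=
  4 * H.edgeSet.ncard - d * H.support.ncard - 16 / (d - 8) * codegPotential θ H

lemma cleaningScore_lt_deleteIncidenceSet {d : ℝ} (θ : ℝ) (hd : 8 < d) {x : V}
    (hx : x ∈ H.support) (hdeg : 4 * H.degree x < d) :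
    cleaningScore d θ H < cleaningScore d θ (H.deleteIncidenceSet x) := by
  have he : ((H.deleteIncidenceSet x).edgeSet.ncard : ℝ) + H.degree x = H.edgeSet.ncard := by
    exact_mod_cast ncard_edgeSet_deleteIncidenceSet_add_degree H x
  have hs : ((H.deleteIncidenceSet x).support.ncard : ℝ) + 1 ≤ H.support.ncard := by
    have := card_support_deleteIncidenceSet H hx
    have : 0 < Fintype.card H.support := Fintype.card_pos_iff.2 ⟨⟨x, hx⟩⟩
    simp only [← Nat.card_coe_set_eq, Nat.card_eq_fintype_card]
    exact_mod_cast (by omega)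
  have hΦ := mul_le_mul_of_nonneg_left (codegPotential_mono θ (H.deleteIncidenceSet_le x))
    (div_nonneg (by norm_num : (0 : ℝ) ≤ 16) (by linarith : (0 : ℝ) ≤ d - 8))
  have hd' := mul_le_mul_of_nonneg_left hs (by linarith : (0 : ℝ) ≤ d)
  rw [mul_add, mul_one] at hd'
  unfold cleaningScore
  linarith

lemma cleaningScore_lt_deleteEdges {d : ℝ} (θ : ℝ) (hd : 8 < d) {u v : V} (huv : H.Adj u v)
    (hdeg : d ≤ 4 * H.degree u) (hfew : 8 * #{w | H.Adj u w ∧ θ ≤ codeg H v w} < d) :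
    cleaningScore d θ H < cleaningScore d θ (H.deleteEdges {s(u, v)}) := by
  have he : ((H.deleteEdges {s(u, v)}).edgeSet.ncard : ℝ) + 1 = H.edgeSet.ncard := by
    exact_mod_cast ncard_edgeSet_deleteEdges_add_one huv
  have hs : ((H.deleteEdges {s(u, v)}).support.ncard : ℝ) ≤ H.support.ncard := by
    exact_mod_cast Set.ncard_le_ncard (support_mono (H.deleteEdges_le _))
  have hΦ := codegPotential_deleteEdges_add_le θ huv
  have hdeg' : (H.degree u : ℝ) ≤ 1 + #{y | H.Adj u y ∧ y ≠ v ∧ (codeg H v y : ℝ) < θ}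
      + #{w | H.Adj u w ∧ θ ≤ codeg H v w} := by
    exact_mod_cast degree_le_one_add_card_add_card θ u v
  set L := #{y | H.Adj u y ∧ y ≠ v ∧ (codeg H v y : ℝ) < θ}
  have hL : d - 8 < 8 * (L : ℝ) := by linarith
  have hgain : 4 < 16 / (d - 8) * (2 * L) := by
    rw [div_mul_eq_mul_div, lt_div_iff₀ (by linarith)]
    linarith
  have hd' := mul_le_mul_of_nonneg_left hs (by linarith : (0 : ℝ) ≤ d)
  have hΦ' := mul_le_mul_of_nonneg_left hΦ
    (div_nonneg (by norm_num : (0 : ℝ) ≤ 16) (by linarith : (0 : ℝ) ≤ d - 8))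
  unfold cleaningScore
  rw [mul_add] at hΦ'
  linarith

lemma cleaningScore_le (H : SimpleGraph V) {d θ : ℝ} (hd : 8 < d) (hθ : 0 ≤ θ) :
    cleaningScore d θ H ≤ 4 * H.edgeSet.ncard := by
  have := mul_nonneg (div_nonneg (by norm_num : (0 : ℝ) ≤ 16) (by linarith : (0 : ℝ) ≤ d - 8))
    (codegPotential_nonneg hθ H)
  have := mul_nonneg (by linarith : (0 : ℝ) ≤ d) (Nat.cast_nonneg H.support.ncard)
  unfold cleaningScore
  linarith

lemma le_cleaningScore (H : SimpleGraph V) {m : ℕ} {d : ℝ} (hm₀ : 0 < m)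
    (hm : H.support.ncard ≤ m) (hd : (m : ℝ) * d = 2 * H.edgeSet.ncard)
    (hd' : 10 * √m + 8 ≤ d) :
    8 / 5 * (H.edgeSet.ncard : ℝ) ≤ cleaningScore d (d / (8 * √m)) H := by
  have hmR : (0 : ℝ) < m := by exact_mod_cast hm₀
  have hs := Real.sqrt_pos.2 hmR
  have hsq := Real.sq_sqrt hmR.le
  have hd8 : 0 < d - 8 := by linarith
  have hsupp : (H.support.ncard : ℝ) ≤ m := by exact_mod_cast hm
  have hθ : 0 ≤ d / (8 * √m) := div_nonneg (by linarith) (by positivity)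
  have hΦ : 16 / (d - 8) * codegPotential (d / (8 * √m)) H ≤ 2 * m * √m * d / (d - 8) := by
    calc 16 / (d - 8) * codegPotential (d / (8 * √m)) H
        ≤ 16 / (d - 8) * ((m : ℝ) ^ 2 * (d / (8 * √m))) := by
          gcongr
          exact (codegPotential_le hθ H).trans (by gcongr)
      _ = 2 * m * √m * d / (d - 8) := by
          field_simp
          linear_combination (-16 * d) * hsq
  have hΦ' : 2 * m * √m * d / (d - 8) ≤ m * d / 5 := by
    rw [div_le_div_iff₀ hd8 (by norm_num)]
    nlinarith [mul_le_mul_of_nonneg_left (by linarith : 10 * √(m : ℝ) ≤ d - 8)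
      (mul_nonneg hmR.le (by linarith) : 0 ≤ (m : ℝ) * d)]
  have := mul_le_mul_of_nonneg_left hsupp (by linarith : (0 : ℝ) ≤ d)
  unfold cleaningScore
  linarith

theorem exists_le_codegree_clean (H₁ : SimpleGraph V) {m : ℕ} {d : ℝ} (hm₀ : 0 < m)
    (hm : H₁.support.ncard ≤ m) (hd : (m : ℝ) * d = 2 * H₁.edgeSet.ncard)
    (hd' : 10 * √m + 8 ≤ d) :
    ∃ H ≤ H₁, 2 * H₁.edgeSet.ncard ≤ 5 * H.edgeSet.ncard ∧
      ∀ u v, H.Adj u v → d / 8 ≤ #{w | H.Adj u w ∧ d / (8 * √m) ≤ codeg H v w} := by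
  set θ := d / (8 * √m)
  have hd8 : 8 < d := by
    have : 0 < √(m : ℝ) := Real.sqrt_pos.2 (by exact_mod_cast hm₀)
    linarith
  obtain ⟨H, hH, hmax⟩ := exists_max_image {H | H ≤ H₁} (cleaningScore d θ) ⟨H₁, by simp⟩
  simp only [mem_filter, mem_univ, true_and] at hH hmax
  have hmindeg : ∀ x ∈ H.support, d ≤ 4 * H.degree x := fun x hx => by
    by_contra! h
    exact (cleaningScore_lt_deleteIncidenceSet θ hd8 hx h).not_ge
      (hmax _ ((H.deleteIncidenceSet_le x).trans hH))
  refine ⟨H, hH, ?_, fun u v huv => ?_⟩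
  · have := (le_cleaningScore H₁ hm₀ hm hd hd').trans
      ((hmax H₁ le_rfl).trans (cleaningScore_le H hd8 (by positivity)))
    have : (2 * H₁.edgeSet.ncard : ℝ) ≤ 5 * H.edgeSet.ncard := by linarith
    exact_mod_cast this
  · by_contra! h
    exact (cleaningScore_lt_deleteEdges θ hd8 huv (hmindeg u ⟨v, huv⟩) (by linarith)).not_ge
      (hmax _ ((H.deleteEdges_le _).trans hH))

end Cleaning

section DegreeSums

variable {V : Type*} (G : SimpleGraph V)

abbrev SimpleGraph.restrict (S : Set V) : SimpleGraph V :=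
  ((⊤ : G.Subgraph).induce S).spanningCoe

variable [Fintype V]

noncomputable def degSum (S : Finset V) : ℕ := ∑ v ∈ S, #(G.neighborFinset v ∩ S)

variable {G}

lemma degree_restrict (S : Finset V) (v : V) :
    (G.restrict S).degree v = if v ∈ S then #(G.neighborFinset v ∩ S) else 0 := by
  rw [← card_neighborFinset_eq_degree]
  split_ifs with hv
  · congr 1
    ext w
    simp [hv, and_comm]
  · rw [card_eq_zero]
    ext w
    simp [hv]

lemma two_mul_ncard_edgeSet_restrict (S : Finset V) :
    2 * (G.restrict S).edgeSet.ncard = degSum G S := by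
  rw [← coe_edgeFinset, Set.ncard_coe_finset, ← sum_degrees_eq_twice_card_edges]
  simp_rw [degree_restrict, sum_ite_mem, univ_inter]
  rfl

lemma restrict_univ : G.restrict (univ : Finset V) = G := by
  ext a b
  simp

lemma degSum_le_sq (S : Finset V) : degSum G S ≤ #S ^ 2 :=
  (sum_le_sum fun _ _ => card_le_card inter_subset_right).trans (by rw [sum_const, smul_eq_mul, sq])

lemma sum_card_neighborFinset_inter_comm (A B : Finset V) :
    ∑ a ∈ A, #(G.neighborFinset a ∩ B) = ∑ b ∈ B, #(G.neighborFinset b ∩ A) := by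
  have h := sum_card_bipartiteAbove_eq_sum_card_bipartiteBelow G.Adj (s := A) (t := B)
  simp only [bipartiteAbove, bipartiteBelow] at h
  convert h using 3 with a _ b _
  · ext w; simp [and_comm]
  · ext w; simp [and_comm, G.adj_comm]

lemma degSum_union {A B : Finset V} (h : Disjoint A B) :
    degSum G (A ∪ B) = degSum G A + degSum G B + 2 * ∑ a ∈ A, #(G.neighborFinset a ∩ B) := by
  have hsplit : ∀ v, #(G.neighborFinset v ∩ (A ∪ B))
      = #(G.neighborFinset v ∩ A) + #(G.neighborFinset v ∩ B) := fun v => by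
    rw [inter_union_distrib_left]
    exact card_union_of_disjoint (h.mono inter_subset_right inter_subset_right)
  simp only [degSum, sum_union h, hsplit, sum_add_distrib]
  rw [sum_card_neighborFinset_inter_comm B A]
  ring

lemma degSum_le_of_le_restrict {H : SimpleGraph V} {S : Finset V} (h : H ≤ G.restrict S) :
    2 * H.edgeSet.ncard ≤ degSum G S := by
  rw [← two_mul_ncard_edgeSet_restrict]
  exact Nat.mul_le_mul_left 2 (Set.ncard_le_ncard (edgeSet_mono h))

end DegreeSums

section Counting

variable {ι : Type*}

/-- Taking the `k` elements of `W` with the largest values of `f`. -/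
lemma exists_subset_card_eq_mul_sum_le (f : ι → ℕ) :
    ∀ (k : ℕ) (W : Finset ι), k ≤ #W → ∃ U ⊆ W, #U = k ∧ k * ∑ v ∈ W, f v ≤ #W * ∑ v ∈ U, f v
  | 0, W, _ => ⟨∅, empty_subset W, card_empty, by simp⟩
  | k + 1, W, hk => by
    obtain ⟨w, hwW, hmax⟩ := exists_max_image W f (card_pos.1 (by omega))
    obtain ⟨U, hUW, hU, hsum⟩ :=
      exists_subset_card_eq_mul_sum_le f k (W.erase w) (by rw [card_erase_of_mem hwW]; omega)
    have hwU : w ∉ U := fun h => (mem_erase.1 (hUW h)).1 rfl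
    refine ⟨insert w U, insert_subset hwW (hUW.trans (erase_subset w W)), by
      rw [card_insert_of_notMem hwU, hU], ?_⟩
    have hrest : ∑ v ∈ (W.erase w) \ U, f v ≤ (#W - 1 - k) * f w := by
      have := sum_le_card_nsmul ((W.erase w) \ U) f (f w)
        fun v hv => hmax v (erase_subset w W (mem_sdiff.1 hv).1)
      rwa [card_sdiff_of_subset hUW, card_erase_of_mem hwW, hU, smul_eq_mul] at this
    have hW := sum_erase_add W f hwW
    have hsplit := sum_sdiff hUW (f := f)
    rw [card_erase_of_mem hwW] at hsum
    rw [sum_insert hwU]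
    obtain ⟨j, hj⟩ : ∃ j, #W = k + 1 + j := ⟨#W - (k + 1), by omega⟩
    rw [hj] at hsum hrest ⊢
    simp only [show k + 1 + j - 1 = k + j by omega, show k + j - k = j by omega] at hsum hrest
    nlinarith

lemma mul_card_filter_lt (S : Finset ι) (hS : S.Nonempty) (f : ι → ℕ) (K : ℕ) :
    K * #{v ∈ S | K * ∑ w ∈ S, f w < #S * f v} < #S := by
  set T := {v ∈ S | K * ∑ w ∈ S, f w < #S * f v}
  rcases T.eq_empty_or_nonempty with hT | ⟨t, ht⟩
  · rw [hT, card_empty, mul_zero]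
    exact card_pos.2 hS
  have hTS : T ⊆ S := filter_subset _ _
  have hlow : #T * (K * ∑ w ∈ S, f w + 1) ≤ #S * ∑ w ∈ S, f w := by
    calc #T * (K * ∑ w ∈ S, f w + 1) ≤ ∑ v ∈ T, #S * f v := by
          have := card_nsmul_le_sum T (fun v => #S * f v) _
            fun v hv => Nat.succ_le_of_lt (mem_filter.1 hv).2
          rwa [smul_eq_mul] at this
      _ ≤ #S * ∑ w ∈ S, f w := by
          rw [← mul_sum]
          exact Nat.mul_le_mul_left _ (sum_le_sum_of_subset hTS)
  have hT1 : 1 ≤ #T := card_pos.2 ⟨t, ht⟩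
  have hpos : 0 < ∑ w ∈ S, f w := by
    have := (mem_filter.1 ht).2
    by_contra! h0
    have : f t ≤ ∑ w ∈ S, f w := single_le_sum (fun _ _ => Nat.zero_le _) (hTS ht)
    nlinarith
  by_contra! hge
  nlinarith

end Counting

section Densification

variable {V : Type*} [Fintype V] {G : SimpleGraph V} {α : ℝ}

/-- `e(G[S]) ≥ α n^{1/21} |S|^{61/42}`. It holds for `S = V` when `e(G) ≥ α n^{3/2}`, and it
forces `|S|^23 ≥ (2α)^42 n^2` since `2 e(G[S]) ≤ |S|^2`. -/
def IsDense (G : SimpleGraph V) (α : ℝ) (S : Finset V) : Prop :=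
  (2 * α) ^ 42 * (Fintype.card V : ℝ) ^ 2 * (#S : ℝ) ^ 61 ≤ (degSum G S : ℝ) ^ 42

lemma IsDense.of_le {S S' : Finset V} (hS : IsDense G α S) {c : ℝ} (hc : 0 ≤ c)
    (hE : c * degSum G S ≤ degSum G S') (hm : (#S' : ℝ) ^ 61 ≤ c ^ 42 * (#S : ℝ) ^ 61) :
    IsDense G α S' := by
  unfold IsDense at *
  calc (2 * α) ^ 42 * (Fintype.card V : ℝ) ^ 2 * (#S' : ℝ) ^ 61
      ≤ (2 * α) ^ 42 * (Fintype.card V : ℝ) ^ 2 * (c ^ 42 * (#S : ℝ) ^ 61) := by gcongr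
    _ = c ^ 42 * ((2 * α) ^ 42 * (Fintype.card V : ℝ) ^ 2 * (#S : ℝ) ^ 61) := by ring
    _ ≤ c ^ 42 * (degSum G S : ℝ) ^ 42 := by gcongr
    _ = (c * degSum G S) ^ 42 := by ring
    _ ≤ (degSum G S' : ℝ) ^ 42 := by gcongr

lemma IsDense.mul_sqrt_le {S : Finset V} (hS : IsDense G α S) :
    2 * α * #S * √(#S : ℝ) ≤ degSum G S := by
  have hSn : (#S : ℝ) ≤ Fintype.card V := by exact_mod_cast card_le_univ S
  refine le_of_pow_le_pow_left₀ (by norm_num : 42 ≠ 0) (Nat.cast_nonneg _) ?_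
  calc (2 * α * #S * √(#S : ℝ)) ^ 42 = (2 * α) ^ 42 * (#S : ℝ) ^ 42 * (√(#S : ℝ) ^ 2) ^ 21 := by
        ring
    _ = (2 * α) ^ 42 * (#S : ℝ) ^ 2 * (#S : ℝ) ^ 61 := by
        rw [Real.sq_sqrt (Nat.cast_nonneg _)]
        ring
    _ ≤ (2 * α) ^ 42 * (Fintype.card V : ℝ) ^ 2 * (#S : ℝ) ^ 61 := by gcongr
    _ ≤ (degSum G S : ℝ) ^ 42 := hS

lemma IsDense.le_sqrt {S : Finset V} (hS : IsDense G α S) (hne : S.Nonempty) :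
    2 * α ≤ √(#S : ℝ) := by
  have hm : (0 : ℝ) < #S := by exact_mod_cast hne.card_pos
  have hs := Real.sqrt_pos.2 hm
  have h1 := hS.mul_sqrt_le
  have h2 : (degSum G S : ℝ) ≤ #S * (√(#S : ℝ) * √(#S : ℝ)) := by
    rw [Real.mul_self_sqrt hm.le, ← sq]
    exact_mod_cast degSum_le_sq S
  have : 2 * α * (#S * √(#S : ℝ)) ≤ √(#S : ℝ) * (#S * √(#S : ℝ)) := by nlinarith
  exact le_of_mul_le_mul_right this (by positivity)

lemma IsDense.le_pow {S : Finset V} (hS : IsDense G α S) (hne : S.Nonempty) :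
    (2 * α) ^ 42 * (Fintype.card V : ℝ) ^ 2 ≤ (#S : ℝ) ^ 23 := by
  have hm : (0 : ℝ) < #S := by exact_mod_cast hne.card_pos
  have hE : (degSum G S : ℝ) ^ 42 ≤ ((#S : ℝ) ^ 2) ^ 42 := by
    gcongr
    exact_mod_cast degSum_le_sq S
  refine le_of_mul_le_mul_right ?_ (pow_pos hm 61)
  calc (2 * α) ^ 42 * (Fintype.card V : ℝ) ^ 2 * (#S : ℝ) ^ 61 ≤ ((#S : ℝ) ^ 2) ^ 42 := hS.trans hE
    _ = (#S : ℝ) ^ 23 * (#S : ℝ) ^ 61 := by ring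

lemma pow_le_mul_pow_of_mul_le {x y c b : ℝ} (hx : 0 ≤ x) (hc : 0 ≤ c) (hxy : c * x ≤ y) (k : ℕ)
    (hb : 1 ≤ c ^ k * b) : x ^ k ≤ b * y ^ k := by
  have hb0 : 0 ≤ b := by
    by_contra! hb0
    nlinarith [pow_nonneg hc k]
  calc x ^ k ≤ c ^ k * b * x ^ k := le_mul_of_one_le_left (pow_nonneg hx k) hb
    _ = b * (c * x) ^ k := by ring
    _ ≤ b * y ^ k := by gcongr

lemma IsDense.of_card_le_of_degSum_le {S T : Finset V} (hS : IsDense G α S) (hT : 320 * #T ≤ #S)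
    (hE : 3 * degSum G S ≤ 16 * degSum G T) : IsDense G α T := by
  refine hS.of_le (c := 3 / 16) (by norm_num) ?_ ?_
  · have : (3 * degSum G S : ℝ) ≤ 16 * degSum G T := by exact_mod_cast hE
    linarith
  · exact pow_le_mul_pow_of_mul_le (c := 320) (Nat.cast_nonneg _) (by norm_num)
      (by exact_mod_cast hT) 61 (by norm_num)

/-- Keeping `T` and the `2|T|` vertices of `S \ T` with the most neighbours in `T`. -/
lemma IsDense.exists_isDense_union {S T : Finset V} (hS : IsDense G α S) (hTS : T ⊆ S)
    (hTne : T.Nonempty) (hT : 320 * #T ≤ #S)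
    (hX : 3 * degSum G S < 32 * ∑ v ∈ S \ T, #(G.neighborFinset v ∩ T)) :
    ∃ U ⊆ S \ T, #U = 2 * #T ∧ IsDense G α (T ∪ U) := by
  obtain ⟨U, hUS, hU, hUX⟩ := exists_subset_card_eq_mul_sum_le (fun v => #(G.neighborFinset v ∩ T))
    (2 * #T) (S \ T) (by rw [card_sdiff_of_subset hTS]; omega)
  set Y := ∑ v ∈ U, #(G.neighborFinset v ∩ T)
  have hdisj : Disjoint T U := disjoint_of_subset_right hUS disjoint_sdiff
  have hY : 2 * Y ≤ degSum G (T ∪ U) := by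
    rw [degSum_union hdisj, sum_card_neighborFinset_inter_comm T U]
    omega
  have hkey : 3 * #T * degSum G S ≤ 16 * #S * Y :=
    calc 3 * #T * degSum G S ≤ #T * (32 * ∑ v ∈ S \ T, #(G.neighborFinset v ∩ T)) := by
          rw [mul_comm 3, mul_assoc]
          exact Nat.mul_le_mul_left _ hX.le
      _ = 16 * (2 * #T * ∑ v ∈ S \ T, #(G.neighborFinset v ∩ T)) := by ring
      _ ≤ 16 * (#(S \ T) * Y) := Nat.mul_le_mul_left _ hUX
      _ ≤ 16 * #S * Y := by
          rw [← mul_assoc]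
          exact Nat.mul_le_mul_right _ (Nat.mul_le_mul_left _ (card_le_card sdiff_subset))
  have hτ : (0 : ℝ) < #T := by exact_mod_cast hTne.card_pos
  have hτS : (320 : ℝ) * #T ≤ #S := by exact_mod_cast hT
  have hSpos : (0 : ℝ) < #S := by linarith
  refine ⟨U, hUS, hU, hS.of_le (c := 3 * #T / (8 * #S)) (by positivity) ?_ ?_⟩
  · have h1 : (3 * #T * degSum G S : ℝ) ≤ 16 * #S * Y := by exact_mod_cast hkey
    have h2 : (2 * Y : ℝ) ≤ degSum G (T ∪ U) := by exact_mod_cast hY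
    rw [div_mul_eq_mul_div, div_le_iff₀ (by positivity)]
    nlinarith
  · have h := pow_le_mul_pow_of_mul_le (x := 3 * #T) (y := #S) (c := 320 / 3) (b := 1 / 8 ^ 42)
      (by positivity) (by norm_num) (by linarith) 19 (by norm_num)
    rw [card_union_of_disjoint hdisj, hU]
    push_cast
    calc ((#T : ℝ) + 2 * #T) ^ 61 = (3 * #T) ^ 42 * (3 * #T) ^ 19 := by ring
      _ ≤ (3 * #T) ^ 42 * (1 / 8 ^ 42 * (#S : ℝ) ^ 19) := by gcongr
      _ = (3 * #T / (8 * #S)) ^ 42 * (#S : ℝ) ^ 61 := by field_simp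

lemma exists_isDense_of_degSum_sdiff_lt {S T : Finset V} (hS : IsDense G α S) (hTS : T ⊆ S)
    (hT : 320 * #T < #S) (hE : 8 * degSum G (S \ T) < 5 * degSum G S) :
    ∃ S', #S' < #S ∧ S'.Nonempty ∧ IsDense G α S' := by
  have hsplit : degSum G S = degSum G (S \ T) + degSum G T
      + 2 * ∑ v ∈ S \ T, #(G.neighborFinset v ∩ T) := by
    rw [← degSum_union sdiff_disjoint, sdiff_union_of_subset hTS]
  have hTne : T.Nonempty := by
    rw [nonempty_iff_ne_empty]
    rintro rfl
    rw [sdiff_empty] at hE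
    omega
  by_cases hET : 3 * degSum G S ≤ 16 * degSum G T
  · exact ⟨T, by omega, hTne, hS.of_card_le_of_degSum_le hT.le hET⟩
  obtain ⟨U, -, hU, hSU⟩ := hS.exists_isDense_union hTS hTne hT.le (by omega)
  refine ⟨T ∪ U, ?_, hTne.mono subset_union_left, hSU⟩
  have := card_union_le T U
  omega

end Densification

section Extraction

variable {V : Type*} {G H : SimpleGraph V} {α : ℝ}

lemma support_subset_of_le_restrict {S : Set V} (h : H ≤ G.restrict S) : H.support ⊆ S :=
  fun _ ⟨_, hvw⟩ => (h hvw).1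

lemma le_restrict_support (h : H ≤ G) : H ≤ G.restrict H.support :=
  fun v w hvw => ⟨⟨w, hvw⟩, ⟨v, hvw.symm⟩, h hvw⟩

lemma support_nonempty_of_ncard_edgeSet_pos (h : 0 < H.edgeSet.ncard) : H.support.Nonempty := by
  obtain ⟨x, hx⟩ := Set.nonempty_of_ncard_ne_zero h.ne'
  induction x using Sym2.ind with
  | h u v => exact ⟨u, v, hx⟩

variable [Fintype V]

def IsCodegreeDense (H : SimpleGraph V) (β : ℝ) : Prop :=
  β * H.support.ncard * √(H.support.ncard : ℝ) ≤ H.edgeSet.ncard ∧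
    ∀ u v, H.Adj u v → β * √(H.support.ncard : ℝ) ≤ #{w | H.Adj u w ∧ β ≤ codeg H v w}

lemma two_mul_ncard_edgeSet_le {D : ℝ} (hD : ∀ v, (H.degree v : ℝ) ≤ D) :
    2 * (H.edgeSet.ncard : ℝ) ≤ H.support.ncard * D := by
  have h := sum_degrees_eq_twice_card_edges H
  rw [← Finset.sum_subset (subset_univ H.support.toFinset) fun v _ hv =>
    (degree_eq_zero_iff_notMem_support H v).2 (by simpa using hv)] at h
  rw [← coe_edgeFinset, Set.ncard_coe_finset, Set.ncard_eq_toFinset_card' H.support]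
  calc 2 * (#H.edgeFinset : ℝ) = ∑ v ∈ H.support.toFinset, (H.degree v : ℝ) := by
        exact_mod_cast h.symm
    _ ≤ #H.support.toFinset * D := by
        rw [← nsmul_eq_mul]
        exact sum_le_card_nsmul _ _ _ fun v _ => hD v

lemma exists_le_restrict_isCodegreeDense {S₁ : Finset V} (hm₁ : 0 < #S₁)
    (hd : 10 * √(#S₁ : ℝ) + 8 ≤ degSum G S₁ / #S₁) :
    ∃ H ≤ G.restrict S₁, (degSum G S₁ : ℝ) ≤ 5 * H.edgeSet.ncard ∧
      IsCodegreeDense H (degSum G S₁ / #S₁ / (8 * √(#S₁ : ℝ))) := by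
  have hm₁R : (0 : ℝ) < #S₁ := by exact_mod_cast hm₁
  have hs₁ : 0 < √(#S₁ : ℝ) := Real.sqrt_pos.2 hm₁R
  have hE : (2 * (G.restrict S₁).edgeSet.ncard : ℝ) = degSum G S₁ := by
    exact_mod_cast two_mul_ncard_edgeSet_restrict S₁
  obtain ⟨H, hH, hHe, hHc⟩ := exists_le_codegree_clean (G.restrict S₁) hm₁
    ((Set.ncard_le_ncard (support_subset_of_le_restrict le_rfl)).trans (Set.ncard_coe_finset S₁).le)
    ((mul_div_cancel₀ _ hm₁R.ne').trans hE.symm) hd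
  have hHe' : (degSum G S₁ : ℝ) ≤ 5 * H.edgeSet.ncard := by
    rw [← hE]
    exact_mod_cast hHe
  have hm₂ : (H.support.ncard : ℝ) ≤ #S₁ := by
    exact_mod_cast (Set.ncard_le_ncard (support_subset_of_le_restrict hH)).trans
      (Set.ncard_coe_finset S₁).le
  refine ⟨H, hH, hHe', ?_, fun u v huv => ?_⟩
  · calc degSum G S₁ / #S₁ / (8 * √(#S₁ : ℝ)) * H.support.ncard * √(H.support.ncard : ℝ)
        ≤ degSum G S₁ / #S₁ / (8 * √(#S₁ : ℝ)) * (#S₁ * √(#S₁ : ℝ)) := by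
          rw [mul_assoc]
          gcongr
      _ = degSum G S₁ / 8 := by field_simp
      _ ≤ H.edgeSet.ncard := by linarith
  · calc degSum G S₁ / #S₁ / (8 * √(#S₁ : ℝ)) * √(H.support.ncard : ℝ)
        ≤ degSum G S₁ / #S₁ / (8 * √(#S₁ : ℝ)) * √(#S₁ : ℝ) := by gcongr
      _ = degSum G S₁ / #S₁ / 8 := by field_simp
      _ ≤ _ := hHc u v huv

lemma IsDense.card_pos_and_le_div {S S₁ : Finset V} (hS : IsDense G α S) (hα : 10 ≤ α)
    (hne : S.Nonempty) (hS₁ : S₁ ⊆ S) (hE : 5 * degSum G S ≤ 8 * degSum G S₁) :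
    0 < #S₁ ∧ 10 * √(#S₁ : ℝ) + 8 ≤ degSum G S₁ / #S₁ := by
  have hEm : 2 * α * #S * √(#S : ℝ) ≤ degSum G S := hS.mul_sqrt_le
  have hm : (0 : ℝ) < #S := by exact_mod_cast hne.card_pos
  have hsm : 20 ≤ √(#S : ℝ) := by linarith [hS.le_sqrt hne]
  have hαm : 10 * (#S * √(#S : ℝ)) ≤ α * (#S * √(#S : ℝ)) := by gcongr
  have h20m : #S * 20 ≤ #S * √(#S : ℝ) := by gcongr
  have hE' : (5 * degSum G S : ℝ) ≤ 8 * degSum G S₁ := by exact_mod_cast hE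
  have hm₁ : 0 < #S₁ := by
    rw [card_pos, nonempty_iff_ne_empty]
    rintro rfl
    rw [show degSum G (∅ : Finset V) = 0 from sum_empty, Nat.cast_zero] at hE'
    linarith
  have hm₁R : (0 : ℝ) < #S₁ := by exact_mod_cast hm₁
  have hm₁m : (#S₁ : ℝ) ≤ #S := by exact_mod_cast card_le_card hS₁
  have hmm₁ : (#S₁ : ℝ) * √(#S₁ : ℝ) ≤ #S * √(#S : ℝ) := by gcongr
  refine ⟨hm₁, ?_⟩
  rw [le_div_iff₀ hm₁R]
  linarith

lemma IsDense.exists_isCodegreeDense {S S₁ : Finset V} (hS : IsDense G α S) (hα : 10 ≤ α)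
    (hne : S.Nonempty) (hS₁ : S₁ ⊆ S)
    (hdeg : ∀ v ∈ S₁, #S * #(G.neighborFinset v ∩ S) ≤ 320 * degSum G S)
    (hE : 5 * degSum G S ≤ 8 * degSum G S₁) :
    ∃ H ≤ G, ∃ θ : ℝ, 5 * degSum G S ≤ 64 * θ * #S * √(#S : ℝ) ∧ IsCodegreeDense H θ ∧
      degSum G S ≤ 8 * H.edgeSet.ncard ∧ ∀ v, #S * H.degree v ≤ 320 * degSum G S := by
  obtain ⟨hm₁, hd⟩ := hS.card_pos_and_le_div hα hne hS₁ hE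
  obtain ⟨H, hH, hHe, hHc⟩ := exists_le_restrict_isCodegreeDense hm₁ hd
  have hm₁R : (0 : ℝ) < #S₁ := by exact_mod_cast hm₁
  have hs₁ : 0 < √(#S₁ : ℝ) := Real.sqrt_pos.2 hm₁R
  have hθE : degSum G S₁ / #S₁ / (8 * √(#S₁ : ℝ)) * (#S₁ * √(#S₁ : ℝ)) = degSum G S₁ / 8 := by
    field_simp
  have hmm₁ : (#S₁ : ℝ) * √(#S₁ : ℝ) ≤ #S * √(#S : ℝ) := by
    have : (#S₁ : ℝ) ≤ #S := by exact_mod_cast card_le_card hS₁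
    gcongr
  have hE' : (5 * degSum G S : ℝ) ≤ 8 * degSum G S₁ := by exact_mod_cast hE
  refine ⟨H, hH.trans fun _ _ h => h.2.2, _, ?_, hHc, ?_, fun v => ?_⟩
  · nlinarith [mul_le_mul_of_nonneg_left hmm₁
      (by positivity : (0 : ℝ) ≤ degSum G S₁ / #S₁ / (8 * √(#S₁ : ℝ)))]
  · have : (degSum G S : ℝ) ≤ 8 * H.edgeSet.ncard := by linarith
    exact_mod_cast this
  · by_cases hv : v ∈ S₁
    · refine le_trans (Nat.mul_le_mul_left _ ?_) (hdeg v hv)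
      refine (degree_le_of_le hH).trans ?_
      rw [degree_restrict, if_pos hv]
      exact card_le_card (inter_subset_inter_left hS₁)
    · rw [(degree_eq_zero_iff_notMem_support H v).2
        fun h => hv (support_subset_of_le_restrict hH h), mul_zero]
      exact Nat.zero_le _

end Extraction

section Iteration

variable {V : Type*} [Fintype V] {G H : SimpleGraph V} {α : ℝ}

def HasCleanSubgraph (G : SimpleGraph V) (α : ℝ) : Prop :=
  ∃ H ≤ G, ∃ β, α / 20 ≤ β ∧ IsCodegreeDense H β ∧
    (∀ v, (H.degree v : ℝ) ≤ 12000 * β * √(H.support.ncard : ℝ)) ∧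
    (2 * α) ^ 42 * (Fintype.card V : ℝ) ^ 2 ≤ 1280 ^ 23 * (H.support.ncard : ℝ) ^ 23

lemma card_le_mul_ncard_support {S : Finset V} (hne : S.Nonempty)
    (hE : degSum G S ≤ 8 * H.edgeSet.ncard) (hdeg : ∀ v, #S * H.degree v ≤ 320 * degSum G S)
    (he : 0 < H.edgeSet.ncard) : (#S : ℝ) ≤ 1280 * H.support.ncard := by
  have hm : (0 : ℝ) < #S := by exact_mod_cast hne.card_pos
  have h := two_mul_ncard_edgeSet_le (H := H) (D := 320 * degSum G S / #S) fun v => by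
    rw [le_div_iff₀ hm, mul_comm]
    exact_mod_cast hdeg v
  have hE' : (degSum G S : ℝ) ≤ 8 * H.edgeSet.ncard := by exact_mod_cast hE
  have he' : (0 : ℝ) < H.edgeSet.ncard := by exact_mod_cast he
  rw [mul_div_assoc', le_div_iff₀ hm] at h
  nlinarith

lemma eight_mul_le_of_mul_sqrt_lt {m m₂ E θ : ℝ} (hm : 0 < m) (hm₂ : 0 ≤ m₂) (hE : 0 < E)
    (hθ : 5 * E ≤ 64 * θ * m * √m) (hlt : 12000 * θ * √m₂ * m < 320 * E) : 8 * m₂ ≤ m := by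
  have hθ0 : 0 < θ := by
    by_contra! h
    nlinarith [mul_nonpos_of_nonpos_of_nonneg h (by positivity : 0 ≤ m * √m)]
  have h₁ : θ * m * (12000 * √m₂) < θ * m * (4096 * √m) := by nlinarith
  have h₂ := lt_of_mul_lt_mul_left h₁ (by positivity)
  nlinarith [Real.sqrt_nonneg m₂, Real.sq_sqrt hm₂, Real.sq_sqrt hm.le]

/-- If the maximum degree of `H` is too large for `θ`, then `H` lives on at most `|S| / 8`
vertices, so its support is a smaller dense set. -/
lemma hasCleanSubgraph_or_isDense_support {S : Finset V} (hα : 10 ≤ α) (hS : IsDense G α S)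
    (hne : S.Nonempty) (hHG : H ≤ G) {θ : ℝ} (hθ : 5 * degSum G S ≤ 64 * θ * #S * √(#S : ℝ))
    (hH : IsCodegreeDense H θ) (hE : degSum G S ≤ 8 * H.edgeSet.ncard)
    (hdeg : ∀ v, #S * H.degree v ≤ 320 * degSum G S) :
    HasCleanSubgraph G α ∨ ∃ S', #S' < #S ∧ S'.Nonempty ∧ IsDense G α S' := by
  have hEm : 2 * α * #S * √(#S : ℝ) ≤ degSum G S := hS.mul_sqrt_le
  have hm : (0 : ℝ) < #S := by exact_mod_cast hne.card_pos
  have hmsm : 0 < (#S : ℝ) * √(#S : ℝ) := by positivity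
  have hEpos : (0 : ℝ) < degSum G S := by nlinarith
  have hE' : (degSum G S : ℝ) ≤ 8 * H.edgeSet.ncard := by exact_mod_cast hE
  have he : 0 < H.edgeSet.ncard := by exact_mod_cast (by linarith : (0 : ℝ) < H.edgeSet.ncard)
  by_cases hmax : 320 * (degSum G S : ℝ) ≤ 12000 * θ * √(H.support.ncard : ℝ) * #S
  · refine Or.inl ⟨H, hHG, θ, ?_, hH, fun v => ?_, ?_⟩
    · have : 10 * α * (#S * √(#S : ℝ)) ≤ 64 * θ * (#S * √(#S : ℝ)) := by nlinarith
      linarith [le_of_mul_le_mul_right this hmsm]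
    · have : (#S * H.degree v : ℝ) ≤ 320 * degSum G S := by exact_mod_cast hdeg v
      rw [← mul_le_mul_iff_right₀ hm]
      linarith
    · calc (2 * α) ^ 42 * (Fintype.card V : ℝ) ^ 2 ≤ (#S : ℝ) ^ 23 := hS.le_pow hne
        _ ≤ (1280 * H.support.ncard) ^ 23 := by
          gcongr
          exact card_le_mul_ncard_support hne hE hdeg he
        _ = 1280 ^ 23 * (H.support.ncard : ℝ) ^ 23 := by ring
  have h8 := eight_mul_le_of_mul_sqrt_lt hm (Nat.cast_nonneg _) hEpos hθ (not_le.1 hmax)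
  have hcard : #H.support.toFinset = H.support.ncard := (Set.ncard_eq_toFinset_card' _).symm
  refine Or.inr ⟨H.support.toFinset, ?_, ?_, hS.of_le (c := 1 / 4) (by norm_num) ?_ ?_⟩
  · rw [hcard]
    exact_mod_cast (by linarith : (H.support.ncard : ℝ) < #S)
  · exact Set.toFinset_nonempty.2 (support_nonempty_of_ncard_edgeSet_pos he)
  · have h := degSum_le_of_le_restrict (S := H.support.toFinset)
      (by simpa using le_restrict_support hHG)
    have : (2 * H.edgeSet.ncard : ℝ) ≤ degSum G H.support.toFinset := by exact_mod_cast h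
    linarith
  · rw [hcard]
    exact pow_le_mul_pow_of_mul_le (Nat.cast_nonneg _) (by norm_num) h8 61 (by norm_num)

lemma hasCleanSubgraph_or_exists_isDense_lt {S : Finset V} (hα : 10 ≤ α) (hS : IsDense G α S)
    (hne : S.Nonempty) :
    HasCleanSubgraph G α ∨ ∃ S', #S' < #S ∧ S'.Nonempty ∧ IsDense G α S' := by
  set T := {v ∈ S | 320 * degSum G S < #S * #(G.neighborFinset v ∩ S)}
  by_cases hE : 5 * degSum G S ≤ 8 * degSum G (S \ T)
  · have hdeg : ∀ v ∈ S \ T, #S * #(G.neighborFinset v ∩ S) ≤ 320 * degSum G S := by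
      intro v hv
      rw [mem_sdiff] at hv
      simpa [T, hv.1] using hv.2
    obtain ⟨H, hHG, θ, hθ, hH, hHE, hHdeg⟩ := hS.exists_isCodegreeDense hα hne sdiff_subset hdeg hE
    exact hasCleanSubgraph_or_isDense_support hα hS hne hHG hθ hH hHE hHdeg
  · exact Or.inr (exists_isDense_of_degSum_sdiff_lt (T := T) hS (filter_subset _ _)
      (mul_card_filter_lt S hne (fun v => #(G.neighborFinset v ∩ S)) 320) (by omega))

theorem hasCleanSubgraph_of_isDense (hα : 10 ≤ α) {S : Finset V} (hS : IsDense G α S)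
    (hne : S.Nonempty) : HasCleanSubgraph G α := by
  induction hm : #S using Nat.strong_induction_on generalizing S with
  | _ m ih =>
    rcases hasCleanSubgraph_or_exists_isDense_lt hα hS hne with h | ⟨S', hlt, hne', hS'⟩
    · exact h
    · exact ih _ (hm ▸ hlt) hS' hne' rfl

end Iteration

section Transfer

variable {V : Type*} {H : SimpleGraph V} {s : Set V}

lemma ncard_preimage_val {t : Set V} (h : t ⊆ s) : (Subtype.val ⁻¹' t : Set s).ncard = t.ncard :=
  Set.ncard_preimage_of_injective_subset_range Subtype.val_injective (by rwa [Subtype.range_coe])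

lemma ncard_neighborSet_induce (h : H.support ⊆ s) (v : s) :
    ((H.induce s).neighborSet v).ncard = (H.neighborSet v).ncard :=
  ncard_preimage_val ((H.neighborSet_subset_support v).trans h)

lemma codeg_induce (h : H.support ⊆ s) (v w : s) : codeg (H.induce s) v w = codeg H v w :=
  ncard_preimage_val (Set.inter_subset_left.trans ((H.neighborSet_subset_support v).trans h))

lemma ncard_edgeSet_induce [Fintype V] (h : H.support ⊆ s) :
    (H.induce s).edgeSet.ncard = H.edgeSet.ncard := by
  rw [← coe_edgeFinset, ← coe_edgeFinset, Set.ncard_coe_finset, Set.ncard_coe_finset]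
  convert card_edgeFinset_induce_of_support_subset h

lemma ncard_adj_codeg_induce [Fintype V] (h : H.support ⊆ s) (β : ℝ) (u v : s) :
    {w : s | (H.induce s).Adj u w ∧ β ≤ codeg (H.induce s) v w}.ncard
      = #{w | H.Adj u w ∧ β ≤ codeg H v w} := by
  rw [← Set.ncard_coe_finset, coe_filter]
  simp only [mem_univ, true_and]
  rw [← ncard_preimage_val fun w hw => h ⟨u, hw.1.symm⟩]
  congr 1
  ext w
  simp [codeg_induce h]

end Transfer

lemma rpow_three_halves {x : ℝ} (hx : 0 ≤ x) : x ^ ((3 : ℝ) / 2) = x * √x := by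
  rw [show (3 : ℝ) / 2 = 1 + 1 / 2 by norm_num, Real.rpow_add' hx (by norm_num), Real.rpow_one,
    Real.sqrt_eq_rpow]

lemma rpow_one_div_twelve_le {α n m : ℝ} (hα : 10 ≤ α) (hn : 2 ^ 1200 ≤ n) (hm : 0 ≤ m)
    (h : (2 * α) ^ 42 * n ^ 2 ≤ 1280 ^ 23 * m ^ 23) : n ^ ((1 : ℝ) / 12) ≤ m := by
  have hn0 : 0 ≤ n := le_trans (by positivity) hn
  set t := n ^ ((1 : ℝ) / 12)
  have ht0 : 0 ≤ t := Real.rpow_nonneg hn0 _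
  have htn : t ^ 12 = n := by
    rw [← Real.rpow_natCast, ← Real.rpow_mul hn0]
    norm_num
  have ht : 2 ^ 100 ≤ t := by
    rw [← pow_le_pow_iff_left₀ (by positivity) ht0 (by norm_num : 12 ≠ 0), htn, ← pow_mul]
    exact hn
  refine le_of_pow_le_pow_left₀ (by norm_num : 23 ≠ 0) hm (le_of_mul_le_mul_left ?_
    (by positivity : (0 : ℝ) < 1280 ^ 23))
  calc (1280 : ℝ) ^ 23 * t ^ 23 ≤ 20 ^ 42 * 2 ^ 100 * t ^ 23 := by gcongr; norm_num
    _ ≤ 20 ^ 42 * t * t ^ 23 := by gcongr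
    _ = 20 ^ 42 * (t ^ 12) ^ 2 := by ring
    _ ≤ (2 * α) ^ 42 * n ^ 2 := by
        rw [htn]
        gcongr
        linarith
    _ ≤ 1280 ^ 23 * m ^ 23 := h

lemma isDense_univ {V : Type*} [Fintype V] {G : SimpleGraph V} {α : ℝ} (hα : 0 ≤ α)
    (h : α * (Fintype.card V : ℝ) ^ ((3 : ℝ) / 2) ≤ G.edgeSet.ncard) : IsDense G α univ := by
  have hE : (degSum G univ : ℝ) = 2 * G.edgeSet.ncard := by
    rw [← two_mul_ncard_edgeSet_restrict, restrict_univ]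
    push_cast
    rfl
  have hn : (0 : ℝ) ≤ Fintype.card V := Nat.cast_nonneg _
  rw [rpow_three_halves hn] at h
  unfold IsDense
  rw [card_univ, hE]
  calc (2 * α) ^ 42 * (Fintype.card V : ℝ) ^ 2 * (Fintype.card V : ℝ) ^ 61
      = (2 * (α * (Fintype.card V * √(Fintype.card V : ℝ)))) ^ 42 := by
        rw [show (2 * (α * (Fintype.card V * √(Fintype.card V : ℝ)))) ^ 42
          = (2 * α) ^ 42 * (Fintype.card V : ℝ) ^ 42 * (√(Fintype.card V : ℝ) ^ 2) ^ 21 by ring,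
          Real.sq_sqrt hn]
        ring
    _ ≤ (2 * G.edgeSet.ncard : ℝ) ^ 42 := by gcongr

end

/-- Lemma 2.3: for `α ≥ 10` and `n` sufficiently large, every `n`-vertex graph
`G` with at least `α n^{3/2}` edges has a subgraph `H` on `m ≥ n^{1/12}`
vertices such that, for some `α' ≥ α/20`: `e(H) ≥ α' m^{3/2}`,
`Δ(H) ≤ 12000 α' m^{1/2}`, and for every edge `uv` of `H`, `u` has at least
`α' m^{1/2}` neighbours `w` in `H` with `d_H(v,w) ≥ α'`. -/
theorem final_cleaning (α : ℝ) (hα : 10 ≤ α) :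
    ∃ N : ℕ, ∀ n : ℕ, N ≤ n → ∀ (V : Type) (_ : Fintype V),
      Fintype.card V = n → ∀ G : SimpleGraph V,
        α * (n : ℝ) ^ ((3 : ℝ) / 2) ≤ (G.edgeSet.ncard : ℝ) →
          ∃ (s : Finset V) (H : SimpleGraph s), H ≤ G.induce (s : Set V) ∧
            (n : ℝ) ^ ((1 : ℝ) / 12) ≤ (s.card : ℝ) ∧
            ∃ α' : ℝ, α / 20 ≤ α' ∧
              α' * (s.card : ℝ) ^ ((3 : ℝ) / 2) ≤ (H.edgeSet.ncard : ℝ) ∧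
              (∀ v : s, ((H.neighborSet v).ncard : ℝ) ≤
                12000 * α' * (s.card : ℝ) ^ ((1 : ℝ) / 2)) ∧
              ∀ u v : s, H.Adj u v →
                α' * (s.card : ℝ) ^ ((1 : ℝ) / 2) ≤
                  (({w : s | H.Adj u w ∧ α' ≤ (codeg H v w : ℝ)}).ncard : ℝ) := by
  classical
  refine ⟨2 ^ 1200, fun n hn V _ hV G hG => ?_⟩
  have hne : (univ : Finset V).Nonempty :=
    univ_nonempty_iff.2 (Fintype.card_pos_iff.1 (hV ▸ lt_of_lt_of_le (by positivity) hn))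
  subst hV
  obtain ⟨H, hHG, β, hβ, ⟨hedge, hcodeg⟩, hdeg, hsize⟩ :=
    hasCleanSubgraph_of_isDense hα (isDense_univ (by linarith) hG) hne
  have hs : H.support ⊆ (H.support.toFinset : Set V) := by simp
  have hcard : (#H.support.toFinset : ℝ) = H.support.ncard := by
    rw [Set.ncard_eq_toFinset_card']
  refine ⟨H.support.toFinset, H.induce _, comap_monotone _ hHG, ?_, β, hβ, ?_, fun v => ?_,
    fun u v huv => ?_⟩ <;> simp only [hcard, ← Real.sqrt_eq_rpow]
  · exact rpow_one_div_twelve_le hα (by exact_mod_cast hn) (Nat.cast_nonneg _) hsize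
  · rw [rpow_three_halves (Nat.cast_nonneg _), ← mul_assoc]
    exact hedge.trans_eq (congrArg Nat.cast (ncard_edgeSet_induce hs).symm)
  · rw [ncard_neighborSet_induce hs, ← Nat.card_coe_set_eq, Nat.card_eq_fintype_card,
      card_neighborSet_eq_degree]
    exact hdeg v
  · exact (hcodeg u v huv).trans_eq (congrArg Nat.cast (ncard_adj_codeg_induce hs β u v).symm)
end

section
/- Let t ≥ 2 be an integer, let α > 0 be a real number, let k be a positive integer, and let G be a simple graph with Δ(G) ≥ α. Let s_1, …, s_{t−1} ≥ 1 be real numbers, let 1 ≤ ℓ ≤ t, let J ⊆ [k], and fix vertices u_j ∈ V(G) for each j ∈ J. Then for any fixed vertices x_1, …, x_t of the k-th tensor power G^k, the number of (s_1, …, s_{t−1})-good t-ladders in G^k of the form (x_1, y_1, x_2, y_2, …, x_t, y_t) satisfying y_ℓ(j) = u_j for all j ∈ J is at most Δ(G)^k · (∏_{i=1}^{t−1} s_i) · α^{−|J|}. -/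
open SimpleGraph Finset

/-- The `k`-th tensor power of `G`: vertices are `k`-tuples of vertices of `G`,
with two tuples adjacent iff they are adjacent in `G` in every coordinate. -/
def tensorPow {V : Type*} (G : SimpleGraph V) (k : ℕ) : SimpleGraph (Fin k → V) where
  Adj x y := x ≠ y ∧ ∀ j, G.Adj (x j) (y j)
  symm := ⟨fun x y h => ⟨h.1.symm, fun j => (h.2 j).symm⟩⟩
  loopless := ⟨fun x h => h.1 rfl⟩

/-- A `t`-ladder in `H` (vertices indexed from `0` to `t-1`):
`x_i x_{i+1}`, `y_i y_{i+1}` are edges for `i < t-1`, and `x_i y_i` is an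
edge for all `i`. -/
def IsLadder {W : Type*} (H : SimpleGraph W) (t : ℕ) (x y : Fin t → W) : Prop :=
  (∀ i : Fin t, H.Adj (x i) (y i)) ∧
  ∀ (i : Fin t) (h : (i : ℕ) + 1 < t),
    H.Adj (x i) (x ⟨(i : ℕ) + 1, h⟩) ∧ H.Adj (y i) (y ⟨(i : ℕ) + 1, h⟩)

/-- An `(s_0, …, s_{t-2})`-good `t`-ladder in `G^k` (with respect to the
parameter `α`): a `t`-ladder `(x_0, y_0, …, x_{t-1}, y_{t-1})` in `G^k` such
that for each `i < t-1` the codegree of `x_{i+1}` and `y_i` in `G^k` is at most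
`s i`, for each `i < t-1` and each coordinate `j` the codegree of `x_{i+1}(j)`
and `y_i(j)` in `G` is at least `α`, and in each coordinate `j` the `2t`
vertices `x_0(j), …, x_{t-1}(j), y_0(j), …, y_{t-1}(j)` are pairwise distinct. -/
def IsGoodLadder {V : Type*} (G : SimpleGraph V) (k t : ℕ) (α : ℝ) (s : ℕ → ℝ)
    (x y : Fin t → (Fin k → V)) : Prop :=
  IsLadder (tensorPow G k) t x y ∧
  (∀ (i : Fin t) (h : (i : ℕ) + 1 < t),
    (codeg (tensorPow G k) (x ⟨(i : ℕ) + 1, h⟩) (y i) : ℝ) ≤ s i ∧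
    ∀ j : Fin k, α ≤ (codeg G (x ⟨(i : ℕ) + 1, h⟩ j) (y i j) : ℝ)) ∧
  ∀ j : Fin k,
    Function.Injective (fun p : Fin t × Bool => if p.2 then x p.1 j else y p.1 j)

/-!
A good ladder on fixed `x` is determined by its rungs `y_0, …, y_{t-1}`, which we choose one at a
time: `y_0` is a neighbour of `x_0` in `G^k` (at most `Δ^k` choices) and `y_{i+1}` is a common
neighbour of `x_{i+1}` and `y_i` (at most `codeg(x_{i+1}, y_i) ≤ s_i` choices). At rung `ℓ` the
coordinates in `J` are prescribed. The codegree in `G^k` is the product of the coordinate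
codegrees, each at least `α`, so prescribing `|J|` coordinates divides the number of choices by at
least `α^{|J|}`; for `ℓ = 0` the same holds because `α ≤ Δ`.
-/

section TensorPower

variable {V : Type*} (G : SimpleGraph V) {k : ℕ}

theorem tensorPow_adj_iff (hk : 0 < k) {a b : Fin k → V} :
    (tensorPow G k).Adj a b ↔ ∀ j, G.Adj (a j) (b j) :=
  ⟨fun h => h.2, fun h => ⟨fun hab => G.ne_of_adj (h ⟨0, hk⟩) (congrFun hab _), h⟩⟩

variable [Fintype V] [DecidableEq V] [DecidableRel G.Adj]

theorem codeg_eq_card_inter (a b : V) :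
    codeg G a b = #(G.neighborFinset a ∩ G.neighborFinset b) := by
  rw [codeg, ← Set.ncard_coe_finset, coe_inter, coe_neighborFinset, coe_neighborFinset]

theorem codeg_tensorPow (hk : 0 < k) (a b : Fin k → V) :
    codeg (tensorPow G k) a b = ∏ j, codeg G (a j) (b j) := by
  have hcommon : (tensorPow G k).neighborSet a ∩ (tensorPow G k).neighborSet b =
      ↑(Fintype.piFinset fun j => G.neighborFinset (a j) ∩ G.neighborFinset (b j)) := by
    ext w
    simp [tensorPow_adj_iff G hk, forall_and]
  rw [codeg, hcommon, Set.ncard_coe_finset, Fintype.card_piFinset]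
  simp only [codeg_eq_card_inter]

end TensorPower

section Counting

variable {ι V : Type*} [Fintype ι] [DecidableEq ι] [DecidableEq V]

theorem prod_compl_le_prod_mul_zpow {J : Finset ι} {f : ι → ℝ} {α : ℝ} (hα : 0 < α)
    (hf : ∀ j, 0 ≤ f j) (hJ : ∀ j ∈ J, α ≤ f j) :
    ∏ j ∈ Jᶜ, f j ≤ (∏ j, f j) * α ^ (-(#J : ℤ)) := by
  rw [zpow_neg, zpow_natCast, ← div_eq_mul_inv, le_div_iff₀ (by positivity),
    ← prod_mul_prod_compl J f, mul_comm (∏ j ∈ J, f j)]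
  gcongr
  · exact prod_nonneg fun j _ => hf j
  · exact prod_const α ▸ prod_le_prod (fun _ _ => hα.le) hJ

theorem card_piFinset_pin_le (S : ι → Finset V) (J : Finset ι) (u : ι → V) (p : Prop)
    [Decidable p] {D : ι → ℝ} {α : ℝ} (hα : 0 < α) (hS : ∀ j, #(S j) ≤ D j)
    (hJ : ∀ j ∈ J, α ≤ D j) :
    (#(Fintype.piFinset fun j => if p ∧ j ∈ J then S j ∩ {u j} else S j) : ℝ) ≤
      (∏ j, D j) * if p then α ^ (-(#J : ℤ)) else 1 := by
  have hD : ∀ j, 0 ≤ D j := fun j => (Nat.cast_nonneg _).trans (hS j)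
  rw [Fintype.card_piFinset, Nat.cast_prod]
  by_cases hp : p
  · calc ∏ j, (#(if p ∧ j ∈ J then S j ∩ {u j} else S j) : ℝ)
        ≤ ∏ j, if j ∈ J then 1 else D j := by
          refine prod_le_prod (fun _ _ => Nat.cast_nonneg _) fun j _ => ?_
          by_cases hj : j ∈ J
          · simpa [hp, hj] using card_le_card (inter_subset_right (s₁ := S j) (s₂ := {u j}))
          · simpa [hj] using hS j
      _ = ∏ j ∈ Jᶜ, D j := by
          rw [← prod_mul_prod_compl J, prod_congr rfl fun j hj => if_pos hj, prod_const_one,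
            one_mul]
          exact prod_congr rfl fun j hj => if_neg (mem_compl.1 hj)
      _ ≤ (∏ j, D j) * α ^ (-(#J : ℤ)) := prod_compl_le_prod_mul_zpow hα hD hJ
      _ = _ := by rw [if_pos hp]
  · simp only [hp, false_and, if_false, mul_one]
    exact prod_le_prod (fun _ _ => Nat.cast_nonneg _) fun j _ => hS j

end Counting

section Chains

variable {A : Type*} [Fintype A] [DecidableEq A]

def stepChains {n : ℕ} (B : Finset A) (C : Fin n → A → Finset A) : Finset (Fin (n + 1) → A) :=
  {y | y 0 ∈ B ∧ ∀ i, y i.succ ∈ C i (y i.castSucc)}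

theorem card_stepChains_le {n : ℕ} (B : Finset A) (C : Fin n → A → Finset A) {c : Fin n → ℝ}
    (hC : ∀ i a, #(C i a) ≤ c i) (hc : ∀ i, 0 ≤ c i) :
    (#(stepChains B C) : ℝ) ≤ #B * ∏ i, c i := by
  induction n generalizing B with
  | zero =>
    rw [Fin.prod_univ_zero, mul_one, Nat.cast_le]
    refine card_le_card_of_injOn (fun y => y 0) (fun y hy => (mem_filter.1 hy).2.1) ?_
    intro y _ y' _ h
    funext i
    rwa [Fin.fin_one_eq_zero i]
  | succ n ih =>
    have htail : ∀ a ∈ B,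
        (#{y ∈ stepChains B C | y 0 = a} : ℝ) ≤ c 0 * ∏ i : Fin n, c i.succ := by
      intro a _
      calc (#{y ∈ stepChains B C | y 0 = a} : ℝ)
          ≤ #(stepChains (C 0 a) fun i : Fin n => C i.succ) := by
            refine Nat.cast_le.2 (card_le_card_of_injOn Fin.tail ?_ ?_)
            · intro y hy
              simp only [stepChains, coe_filter, mem_filter, mem_univ, true_and,
                Set.mem_ofPred_eq] at hy ⊢
              obtain ⟨⟨-, hstep⟩, rfl⟩ := hy
              refine ⟨hstep 0, fun i => ?_⟩
              rw [Fin.tail, Fin.tail, Fin.succ_castSucc]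
              exact hstep i.succ
            · intro y hy y' hy' h
              simp only [coe_filter, Set.mem_ofPred_eq] at hy hy'
              rw [← Fin.cons_self_tail y, ← Fin.cons_self_tail y', hy.2, hy'.2, h]
        _ ≤ #(C 0 a) * ∏ i : Fin n, c i.succ := ih _ _ (fun i => hC i.succ) (fun i => hc i.succ)
        _ ≤ c 0 * ∏ i : Fin n, c i.succ := by
            gcongr
            · exact prod_nonneg fun i _ => hc i.succ
            · exact hC 0 a
    have hmaps : Set.MapsTo (fun y => y 0) (stepChains B C : Set (Fin (n + 2) → A)) B :=
      fun y hy => (mem_filter.1 hy).2.1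
    rw [card_eq_sum_card_fiberwise hmaps, Fin.prod_univ_succ, Nat.cast_sum]
    calc ∑ a ∈ B, (#{y ∈ stepChains B C | y 0 = a} : ℝ) ≤ ∑ _a ∈ B, c 0 * ∏ i : Fin n, c i.succ :=
          sum_le_sum htail
      _ = #B * (c 0 * ∏ i : Fin n, c i.succ) := by rw [sum_const, nsmul_eq_mul]

end Chains

section Ladder

variable {V : Type*} [Fintype V] [DecidableEq V] (G : SimpleGraph V) [DecidableRel G.Adj]
  {k n : ℕ} (α : ℝ) (s : ℕ → ℝ) (x : Fin (n + 1) → Fin k → V) (ℓ : Fin (n + 1))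
  (J : Finset (Fin k)) (u : Fin k → V)

noncomputable def firstRungChoices : Finset (Fin k → V) :=
  Fintype.piFinset fun j =>
    if 0 = ℓ ∧ j ∈ J then G.neighborFinset (x 0 j) ∩ {u j} else G.neighborFinset (x 0 j)

/-- Empty unless the step from `z` satisfies the codegree conditions of a good ladder, so that a
single bound holds for every `z`. -/
noncomputable def nextRungChoices (i : Fin n) (z : Fin k → V) : Finset (Fin k → V) :=
  if (codeg (tensorPow G k) (x i.succ) z : ℝ) ≤ s i ∧
      ∀ j, α ≤ (codeg G (x i.succ j) (z j) : ℝ) then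
    Fintype.piFinset fun j =>
      if i.succ = ℓ ∧ j ∈ J then G.neighborFinset (x i.succ j) ∩ G.neighborFinset (z j) ∩ {u j}
      else G.neighborFinset (x i.succ j) ∩ G.neighborFinset (z j)
  else ∅

variable {G α s x ℓ J u}

theorem card_firstRungChoices_le (hα : 0 < α) (hΔ : α ≤ G.maxDegree) :
    (#(firstRungChoices G x ℓ J u) : ℝ) ≤
      G.maxDegree ^ k * if 0 = ℓ then α ^ (-(#J : ℤ)) else 1 := by
  have hdeg : ∀ j, (#(G.neighborFinset (x 0 j)) : ℝ) ≤ G.maxDegree := fun j => by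
    rw [card_neighborFinset_eq_degree]
    exact_mod_cast G.degree_le_maxDegree _
  unfold firstRungChoices
  calc _ ≤ (∏ _j : Fin k, (G.maxDegree : ℝ)) * if 0 = ℓ then α ^ (-(#J : ℤ)) else 1 :=
        card_piFinset_pin_le _ J u (0 = ℓ) hα hdeg fun _ _ => hΔ
    _ = _ := by rw [prod_const, card_univ, Fintype.card_fin]

theorem card_nextRungChoices_le (hk : 0 < k) (hα : 0 < α) (i : Fin n) (z : Fin k → V)
    (hs : 0 ≤ s i) :
    (#(nextRungChoices G α s x ℓ J u i z) : ℝ) ≤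
      s i * if i.succ = ℓ then α ^ (-(#J : ℤ)) else 1 := by
  set pin : ℝ := if i.succ = ℓ then α ^ (-(#J : ℤ)) else 1
  unfold nextRungChoices
  split_ifs with hgood
  · calc _ ≤ (∏ j, (codeg G (x i.succ j) (z j) : ℝ)) * pin :=
          card_piFinset_pin_le _ J u _ hα
            (fun j => by exact_mod_cast (codeg_eq_card_inter G _ _).ge) fun j _ => hgood.2 j
      _ ≤ s i * pin := by
          gcongr
          rw [← Nat.cast_prod, ← codeg_tensorPow G hk]
          exact hgood.1
  · rw [card_empty, Nat.cast_zero]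
    exact mul_nonneg hs (by positivity)

theorem IsGoodLadder.mem_stepChains {y : Fin (n + 1) → Fin k → V}
    (hy : IsGoodLadder G k (n + 1) α s x y) (hpin : ∀ j ∈ J, y ℓ j = u j) :
    y ∈ stepChains (firstRungChoices G x ℓ J u) (nextRungChoices G α s x ℓ J u) := by
  obtain ⟨⟨hrung, hrail⟩, hcodeg, -⟩ := hy
  have hpinned : ∀ m j, m = ℓ ∧ j ∈ J → y m j = u j := fun m j h => h.1 ▸ hpin j h.2
  refine mem_filter.2 ⟨mem_univ _, ?_, fun i => ?_⟩
  · rw [firstRungChoices, Fintype.mem_piFinset]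
    intro j
    have hadj := (G.mem_neighborFinset _ _).2 ((hrung 0).2 j)
    split_ifs with h
    · exact mem_inter.2 ⟨hadj, mem_singleton.2 (hpinned 0 j h)⟩
    · exact hadj
  · have hstep : (codeg (tensorPow G k) (x i.succ) (y i.castSucc) : ℝ) ≤ s i ∧
        ∀ j, α ≤ (codeg G (x i.succ j) (y i.castSucc j) : ℝ) := hcodeg i.castSucc i.succ.isLt
    rw [nextRungChoices, if_pos hstep, Fintype.mem_piFinset]
    intro j
    have hcommon : y i.succ j ∈ G.neighborFinset (x i.succ j) ∩ G.neighborFinset (y i.castSucc j) :=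
      mem_inter.2 ⟨(G.mem_neighborFinset _ _).2 ((hrung i.succ).2 j),
        (G.mem_neighborFinset _ _).2 ((hrail i.castSucc i.succ.isLt).2.2 j)⟩
    split_ifs with h
    · exact mem_inter.2 ⟨hcommon, mem_singleton.2 (hpinned i.succ j h)⟩
    · exact hcommon

end Ladder

theorem few_bad_ladders_a_general (t : ℕ) (α : ℝ) (hα : 0 < α)
    (k : ℕ) (hk : 0 < k) (V : Type) [Fintype V] (G : SimpleGraph V)
    [DecidableRel G.Adj] (hΔ : α ≤ (G.maxDegree : ℝ))
    (s : ℕ → ℝ) (hs : ∀ i, i < t - 1 → 1 ≤ s i)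
    (ℓ : Fin t) (J : Finset (Fin k)) (u : Fin k → V)
    (x : Fin t → (Fin k → V)) :
    (Nat.card {y : Fin t → (Fin k → V) //
        IsGoodLadder G k t α s x y ∧ ∀ j ∈ J, y ℓ j = u j} : ℝ) ≤
      (G.maxDegree : ℝ) ^ k * (∏ i ∈ range (t - 1), s i) * α ^ (-(J.card : ℤ)) := by
  classical
  obtain ⟨n, rfl⟩ : ∃ n, t = n + 1 := Nat.exists_eq_add_one.2 ℓ.pos
  set β : ℝ := α ^ (-(#J : ℤ))
  have hs_nonneg : ∀ i : Fin n, 0 ≤ s i := fun i => zero_le_one.trans (hs i (by omega))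
  have hβ : (if 0 = ℓ then β else 1) * ∏ i : Fin n, (if i.succ = ℓ then β else 1) = β := by
    rw [← Fin.prod_univ_succ fun m => if m = ℓ then β else 1, prod_ite_eq' univ ℓ,
      if_pos (mem_univ _)]
  calc _ ≤ (#(stepChains (firstRungChoices G x ℓ J u) (nextRungChoices G α s x ℓ J u)) : ℝ) := by
        rw [Nat.card_eq_fintype_card, Fintype.card_subtype]
        refine Nat.cast_le.2 (card_le_card fun y hy => ?_)
        obtain ⟨-, hgood, hpin⟩ := mem_filter.1 hy
        exact hgood.mem_stepChains hpin
    _ ≤ #(firstRungChoices G x ℓ J u) * ∏ i : Fin n, s i * if i.succ = ℓ then β else 1 :=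
        card_stepChains_le _ _ (fun i z => card_nextRungChoices_le hk hα i z (hs_nonneg i))
          fun i => mul_nonneg (hs_nonneg i) (by positivity)
    _ ≤ (G.maxDegree ^ k * if 0 = ℓ then β else 1) *
          ∏ i : Fin n, s i * if i.succ = ℓ then β else 1 := by
        gcongr
        · exact prod_nonneg fun i _ => mul_nonneg (hs_nonneg i) (by positivity)
        · exact card_firstRungChoices_le hα hΔ
    _ = _ := by
        rw [prod_mul_distrib, Fin.prod_univ_eq_prod_range (fun i => s i), Nat.add_sub_cancel]
        linear_combination ((G.maxDegree : ℝ) ^ k * ∏ i ∈ range n, s i) * hβ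

/-- Lemma 2.5(a): for fixed `x_0, …, x_{t-1}` in `G^k`, `ℓ`, `J ⊆ [k]` and
fixed vertices `u j` for `j ∈ J`, the number of good `t`-ladders
`(x_0, y_0, …, x_{t-1}, y_{t-1})` with `y_ℓ(j) = u j` for all `j ∈ J` is at
most `Δ(G)^k · (∏ s_i) · α^{-|J|}`. -/
theorem few_bad_ladders_a (t : ℕ) (ht : 2 ≤ t) (α : ℝ) (hα : 0 < α)
    (k : ℕ) (hk : 0 < k) (V : Type) [Fintype V] (G : SimpleGraph V)
    [DecidableRel G.Adj] (hΔ : α ≤ (G.maxDegree : ℝ))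
    (s : ℕ → ℝ) (hs : ∀ i, i < t - 1 → 1 ≤ s i)
    (ℓ : Fin t) (J : Finset (Fin k)) (u : Fin k → V)
    (x : Fin t → (Fin k → V)) :
    (Nat.card {y : Fin t → (Fin k → V) //
        IsGoodLadder G k t α s x y ∧ ∀ j ∈ J, y ℓ j = u j} : ℝ) ≤
      (G.maxDegree : ℝ) ^ k * (∏ i ∈ range (t - 1), s i) * α ^ (-(J.card : ℤ)) :=
  few_bad_ladders_a_general t α hα k hk V G hΔ s hs ℓ J u x
end
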